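/- arXiv:math/0210309 — 5 statements merged into one kernel-verified Lean document; each statement's English description precedes it below -/
import Mathlib

section
/- Let r_1, …, r_m be a finite sequence of integers such that r_k ≥ 2 for all k and ∑_{k=1}^m (r_k − 1/r_k) < 24. Set r := lcm(r_1, …, r_m). Then r · (24 − ∑_{k=1}^m (r_k − 1/r_k)) ≤ 2489, and equality holds if and only if m = 4 and the multiset {r_1, r_2, r_3, r_4} equals {3, 4, 5, 7}. -/
/-!
For `v ≥ 2` we have `v - 1/v ≥ v - 1/2`, so the hypothesis forces `∑ (2 r_k - 1) ≤ 47`. Only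
2590 multisets of integers `≥ 2` satisfy this bound (all their entries lie in `[2, 24]`), and
evaluating `B` on each of them shows that the maximum `2489` is attained only at `{3, 4, 5, 7}`.
-/

/-- `B S` for a finite multiset `S` of positive integers:
`lcm(S) * (24 - ∑_{r ∈ S} (r - 1/r))`, computed in `ℚ`. -/
def B (S : Multiset ℕ) : ℚ :=
  (S.lcm : ℚ) * (24 - (S.map (fun r => (r : ℚ) - 1 / r)).sum)

def oddWeight (S : Multiset ℕ) : ℕ := (S.map fun v => 2 * v - 1).sum

/-- The multisets with entries in `[2, n + 1]` and `oddWeight ≤ b`, listed by the multiplicity `k`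
of the largest admissible entry. -/
def boundedMultisets : ℕ → ℕ → List (Multiset ℕ)
  | 0, _ => [0]
  | n + 1, b => (List.range (b / (2 * n + 3) + 1)).flatMap fun k =>
      (boundedMultisets n (b - k * (2 * n + 3))).map (Multiset.replicate k (n + 2) + ·)

theorem mem_boundedMultisets {n b : ℕ} {S : Multiset ℕ} (hS : ∀ v ∈ S, 2 ≤ v ∧ v ≤ n + 1)
    (hw : oddWeight S ≤ b) : S ∈ boundedMultisets n b := by
  induction n generalizing b S with
  | zero =>
    have : S = 0 := Multiset.eq_zero_of_forall_notMem fun v hv => by have := hS v hv; omega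
    simp [boundedMultisets, this]
  | succ n ih =>
    set k := S.count (n + 2)
    set T := S.filter (· ≠ n + 2)
    have hsplit : Multiset.replicate k (n + 2) + T = S := by
      rw [← Multiset.filter_eq', Multiset.filter_add_not]
    have hwS : oddWeight S = k * (2 * n + 3) + oddWeight T := by
      conv_lhs => rw [← hsplit]
      rw [oddWeight, oddWeight, Multiset.map_add, Multiset.sum_add, Multiset.map_replicate,
        Multiset.sum_replicate, smul_eq_mul, show 2 * (n + 2) - 1 = 2 * n + 3 by omega]
    have hT : ∀ v ∈ T, 2 ≤ v ∧ v ≤ n + 1 := fun v hv => by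
      obtain ⟨hvS, hne⟩ := Multiset.mem_filter.mp hv
      have := hS v hvS
      omega
    simp only [boundedMultisets, List.mem_flatMap, List.mem_range, List.mem_map]
    refine ⟨k, ?_, T, ih hT (b := b - k * (2 * n + 3)) (by omega), hsplit⟩
    rw [Nat.lt_succ_iff, Nat.le_div_iff_mul_le (by omega)]
    omega

theorem oddWeight_le_two_mul_sum {S : Multiset ℕ} (hS : ∀ v ∈ S, 2 ≤ v) :
    (oddWeight S : ℚ) ≤ 2 * (S.map fun v : ℕ => (v : ℚ) - 1 / v).sum := by
  rw [oddWeight, Nat.cast_multiset_sum, Multiset.map_map, ← Multiset.sum_map_mul_left]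
  refine Multiset.sum_map_le_sum_map _ _ fun v hv => ?_
  have hv2 := hS v hv
  have hvq : (2 : ℚ) ≤ v := by exact_mod_cast hv2
  have : 1 / (v : ℚ) ≤ 1 / 2 := one_div_le_one_div_of_le two_pos hvq
  simp only [Function.comp_apply]
  rw [Nat.cast_sub (by omega)]
  push_cast
  linarith

theorem B_le_of_mem_boundedMultisets :
    ∀ S ∈ boundedMultisets 23 47, B S ≤ 2489 ∧ (B S = 2489 ↔ S = {3, 4, 5, 7}) := by
  decide +kernel

theorem B_le_of_sum_lt {S : Multiset ℕ} (hS : ∀ v ∈ S, 2 ≤ v)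
    (hsum : (S.map fun v : ℕ => (v : ℚ) - 1 / v).sum < 24) :
    B S ≤ 2489 ∧ (B S = 2489 ↔ S = {3, 4, 5, 7}) := by
  have hw : oddWeight S ≤ 47 := by
    have := oddWeight_le_two_mul_sum hS
    have : (oddWeight S : ℚ) < 48 := by linarith
    exact Nat.lt_succ_iff.mp (by exact_mod_cast this)
  refine B_le_of_mem_boundedMultisets S (mem_boundedMultisets (fun v hv => ⟨hS v hv, ?_⟩) hw)
  have : 2 * v - 1 ≤ oddWeight S :=
    Multiset.le_sum_of_mem (Multiset.mem_map_of_mem (fun v => 2 * v - 1) hv)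
  omega

theorem stmt_0 (m : ℕ) (r : Fin m → ℕ) (h2 : ∀ k, 2 ≤ r k)
    (hsum : ∑ k, ((r k : ℚ) - 1 / (r k)) < 24) :
    B (Multiset.map r Finset.univ.val) ≤ 2489 ∧
      (B (Multiset.map r Finset.univ.val) = 2489 ↔
        m = 4 ∧ Multiset.map r Finset.univ.val = ({3, 4, 5, 7} : Multiset ℕ)) := by
  have hS : ∀ v ∈ Multiset.map r Finset.univ.val, 2 ≤ v := by
    simpa using h2
  have hsum' : ((Multiset.map r Finset.univ.val).map fun v : ℕ => (v : ℚ) - 1 / v).sum < 24 := by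
    rwa [Multiset.map_map, ← Finset.sum_eq_multiset_sum]
  obtain ⟨hle, heq⟩ := B_le_of_sum_lt hS hsum'
  refine ⟨hle, heq.trans ⟨fun h => ⟨?_, h⟩, And.right⟩⟩
  simpa using congrArg Multiset.card h
end

section
/- Let p and q be distinct prime numbers, let a ≥ 1 and b ≥ 1 be integers, and let S be a finite multiset of positive integers. Then lcm of the multiset S + {p^a · q^b} equals lcm of the multiset S + {p^a, q^b}, and B(S + {p^a · q^b}) < B(S + {p^a, q^b}), where S + T denotes the multiset obtained by adjoining the elements of T to S. -/
theorem sub_inv_add_sub_inv_lt_mul_sub_inv {K : Type*} [Field K] [LinearOrder K]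
    [IsStrictOrderedRing K] {x y : K} (hx : 1 < x) (hy : 1 < y) :
    x - x⁻¹ + (y - y⁻¹) < x * y - (x * y)⁻¹ := by
  have hx0 : x ≠ 0 := (zero_lt_one.trans hx).ne'
  have hy0 : y ≠ 0 := (zero_lt_one.trans hy).ne'
  have key : x * y - (x * y)⁻¹ - (x - x⁻¹ + (y - y⁻¹))
      = (x * y - 1) * (x - 1) * (y - 1) / (x * y) := by
    field_simp
    ring
  have hxy : 1 < x * y := one_lt_mul_of_lt_of_le hx hy.le
  have : 0 < (x * y - 1) * (x - 1) * (y - 1) / (x * y) := by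
    apply div_pos
    · apply mul_pos (mul_pos _ _) <;> linarith
    · linarith
  linarith

theorem Multiset.lcm_add_singleton_mul_of_coprime {m n : ℕ} (hmn : m.Coprime n)
    (S : Multiset ℕ) : (S + {m * n}).lcm = (S + {m, n}).lcm := by
  have hpair : ({m, n} : Multiset ℕ).lcm = m * n := by
    simp [Multiset.insert_eq_cons, Multiset.lcm_cons, lcm_eq_nat_lcm, hmn.lcm_eq_mul]
  rw [Multiset.lcm_add, Multiset.lcm_add, hpair, Multiset.lcm_singleton, normalize_eq]

-- `B` maps over the coercion of `S` to `Multiset ℚ` (a monadic bind), not over `S` itself.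
theorem B_eq (S : Multiset ℕ) :
    B S = (S.lcm : ℚ) * (24 - (S.map fun r : ℕ => (r : ℚ) - (r : ℚ)⁻¹).sum) := by
  simp [B]

theorem B_add_lt_B_add {S T U : Multiset ℕ} (hST : 0 ∉ S + T)
    (hlcm : (S + T).lcm = (S + U).lcm)
    (hsum : (U.map fun r : ℕ => (r : ℚ) - (r : ℚ)⁻¹).sum
      < (T.map fun r : ℕ => (r : ℚ) - (r : ℚ)⁻¹).sum) :
    B (S + T) < B (S + U) := by
  have hpos : (0 : ℚ) < (S + U).lcm := by
    rw [← hlcm]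
    exact_mod_cast Nat.pos_of_ne_zero (mt (Multiset.lcm_eq_zero_iff _).1 hST)
  rw [B_eq, B_eq, hlcm, Multiset.map_add, Multiset.map_add, Multiset.sum_add, Multiset.sum_add]
  gcongr

theorem stmt_2 (p q : ℕ) (hp : p.Prime) (hq : q.Prime) (hpq : p ≠ q)
    (a b : ℕ) (ha : 1 ≤ a) (hb : 1 ≤ b)
    (S : Multiset ℕ) (hS : ∀ x ∈ S, 0 < x) :
    (S + {p ^ a * q ^ b}).lcm = (S + {p ^ a, q ^ b}).lcm ∧
      B (S + {p ^ a * q ^ b}) < B (S + {p ^ a, q ^ b}) := by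
  have hcop : (p ^ a).Coprime (q ^ b) :=
    Nat.Coprime.pow a b ((Nat.coprime_primes hp hq).mpr hpq)
  have hlcm := Multiset.lcm_add_singleton_mul_of_coprime hcop S
  refine ⟨hlcm, B_add_lt_B_add ?_ hlcm ?_⟩
  · simp only [Multiset.mem_add, Multiset.mem_singleton, not_or]
    exact ⟨fun h => (hS 0 h).false, (Nat.mul_pos (pow_pos hp.pos a) (pow_pos hq.pos b)).ne⟩
  · have hpa : (1 : ℚ) < (p : ℚ) ^ a := one_lt_pow₀ (by exact_mod_cast hp.one_lt) (by omega)
    have hqb : (1 : ℚ) < (q : ℚ) ^ b := one_lt_pow₀ (by exact_mod_cast hq.one_lt) (by omega)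
    simpa [mul_comm] using sub_inv_add_sub_inv_lt_mul_sub_inv hpa hqb
end

section
/- Every finite multiset S of positive integers with at most three elements satisfies B(S) ≤ 2401; in particular B(S) < 2489. -/
/-- Bounding polynomial inequality: for `1 ≤ A,B,C < 25`,
`24·ABC − ABC·(A+B+C) + (BC+AC+AB) ≤ 2401`. -/
lemma polybound (A B C : ℚ) (hA1 : 1 ≤ A) (hB1 : 1 ≤ B) (hC1 : 1 ≤ C)
    (hA25 : A < 25) (hB25 : B < 25) (hC25 : C < 25) :
    24*(A*B*C) - (A*B*C)*(A+B+C) + (B*C + A*C + A*B) ≤ 2401 := by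
  have hA0 : (0:ℚ) < A := by linarith
  have hB0 : (0:ℚ) < B := by linarith
  have hC0 : (0:ℚ) < C := by linarith
  rcases le_or_gt (A + B + C) 24 with hs | hs
  · have h1 : A*B ≤ ((A+B)/2)^2 := by linarith [sq_nonneg (A-B)]
    have h2 : C*(24-A-B-C) ≤ ((24-A-B)/2)^2 := by
      linarith [sq_nonneg ((24-A-B) - 2*C)]
    have h4 : (A+B)*(24-A-B) ≤ 144 := by linarith [sq_nonneg (A+B-12)]
    have h4' : (0:ℚ) ≤ (A+B)*(24-A-B) :=
      mul_nonneg (by linarith) (by linarith)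
    have hsq : ((A+B)*(24-A-B))*((A+B)*(24-A-B)) ≤ 144*144 :=
      mul_le_mul h4 h4 h4' (by norm_num)
    have hCD0 : (0:ℚ) ≤ C*(24-A-B-C) := mul_nonneg hC0.le (by linarith)
    have hmul : A*B*(C*(24-A-B-C)) ≤ ((A+B)/2)^2 * ((24-A-B)/2)^2 :=
      mul_le_mul h1 h2 hCD0 (by positivity)
    have h5 : A*B*(C*(24-A-B-C)) ≤ 1296 := by linarith [hmul, hsq]
    have hs2 : (A+B+C)*(A+B+C) ≤ 24*24 :=
      mul_le_mul hs hs (by linarith) (by norm_num)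
    have h6 : A*B + B*C + A*C ≤ 192 := by
      linarith [sq_nonneg (A-B), sq_nonneg (B-C), sq_nonneg (A-C), hs2]
    linarith [h5, h6]
  · have h7 : A*B*C*(24-(A+B+C)) ≤ 0 :=
      mul_nonpos_of_nonneg_of_nonpos (by positivity) (by linarith)
    have h8a : A*B ≤ 625 := by
      linarith [mul_le_mul hA25.le hB25.le hB0.le (by norm_num : (0:ℚ) ≤ 25)]
    have h8b : B*C ≤ 625 := by
      linarith [mul_le_mul hB25.le hC25.le hC0.le (by norm_num : (0:ℚ) ≤ 25)]
    have h8c : A*C ≤ 625 := by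
      linarith [mul_le_mul hA25.le hC25.le hC0.le (by norm_num : (0:ℚ) ≤ 25)]
    linarith [h7, h8a, h8b, h8c]

/-- Padding a multiset with a `1` does not change `B`. -/
lemma B_cons_one (S : Multiset ℕ) : B (1 ::ₘ S) = B S := by
  simp [B, Multiset.lcm_cons]

/-- The triple case: `B {a,b,c} ≤ 2401` for positive `a b c`. -/
lemma key (a b c : ℕ) (ha : 0 < a) (hb : 0 < b) (hc : 0 < c) :
    B (a ::ₘ b ::ₘ c ::ₘ 0) ≤ 2401 := by
  have hBeq : B (a ::ₘ b ::ₘ c ::ₘ 0) =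
      ((lcm a (lcm b c) : ℕ) : ℚ) *
        (24 - (((a:ℚ) - 1/a) + (((b:ℚ) - 1/b) + ((c:ℚ) - 1/c)))) := by
    simp [B, Multiset.lcm_cons]
  rw [hBeq]
  have ha1 : (1:ℕ) ≤ a := ha
  have hb1 : (1:ℕ) ≤ b := hb
  have hc1 : (1:ℕ) ≤ c := hc
  have hA1 : 1 ≤ (a:ℚ) := by exact_mod_cast ha1
  have hB1 : 1 ≤ (b:ℚ) := by exact_mod_cast hb1
  have hC1 : 1 ≤ (c:ℚ) := by exact_mod_cast hc1
  have hA0 : 0 < (a:ℚ) := by linarith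
  have hB0 : 0 < (b:ℚ) := by linarith
  have hC0 : 0 < (c:ℚ) := by linarith
  have hiA : 1/(a:ℚ) ≤ 1 := by rw [div_le_one hA0]; linarith
  have hiB : 1/(b:ℚ) ≤ 1 := by rw [div_le_one hB0]; linarith
  have hiC : 1/(c:ℚ) ≤ 1 := by rw [div_le_one hC0]; linarith
  have hiA0 : 0 < 1/(a:ℚ) := by positivity
  have hiB0 : 0 < 1/(b:ℚ) := by positivity
  have hiC0 : 0 < 1/(c:ℚ) := by positivity
  rcases le_or_gt (24 - (((a:ℚ) - 1/a) + (((b:ℚ) - 1/b) + ((c:ℚ) - 1/c)))) 0 with ht | ht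
  · have : ((lcm a (lcm b c) : ℕ) : ℚ) *
        (24 - (((a:ℚ) - 1/a) + (((b:ℚ) - 1/b) + ((c:ℚ) - 1/c)))) ≤ 0 :=
      mul_nonpos_of_nonneg_of_nonpos (Nat.cast_nonneg _) ht
    linarith
  · have hA25 : (a:ℚ) < 25 := by linarith
    have hB25 : (b:ℚ) < 25 := by linarith
    have hC25 : (c:ℚ) < 25 := by linarith
    have hLd : lcm a (lcm b c) ∣ a * (b * c) :=
      lcm_dvd (dvd_mul_right _ _)
        (dvd_mul_of_dvd_right (lcm_dvd (dvd_mul_right _ _) (dvd_mul_left _ _)) _)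
    have hLle : ((lcm a (lcm b c) : ℕ) : ℚ) ≤ (a:ℚ) * ((b:ℚ) * (c:ℚ)) := by
      have h := Nat.le_of_dvd (by positivity) hLd
      exact_mod_cast h
    have step : ((lcm a (lcm b c) : ℕ) : ℚ) *
          (24 - (((a:ℚ) - 1/a) + (((b:ℚ) - 1/b) + ((c:ℚ) - 1/c)))) ≤
        (a:ℚ) * ((b:ℚ) * (c:ℚ)) *
          (24 - (((a:ℚ) - 1/a) + (((b:ℚ) - 1/b) + ((c:ℚ) - 1/c)))) :=
      mul_le_mul_of_nonneg_right hLle ht.le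
    refine step.trans ?_
    have hexp : (a:ℚ) * ((b:ℚ) * (c:ℚ)) *
          (24 - (((a:ℚ) - 1/a) + (((b:ℚ) - 1/b) + ((c:ℚ) - 1/c)))) =
        24*((a:ℚ)*(b:ℚ)*(c:ℚ)) - ((a:ℚ)*(b:ℚ)*(c:ℚ))*((a:ℚ)+(b:ℚ)+(c:ℚ)) +
          ((b:ℚ)*(c:ℚ) + (a:ℚ)*(c:ℚ) + (a:ℚ)*(b:ℚ)) := by
      field_simp
      ring
    rw [hexp]
    exact polybound _ _ _ hA1 hB1 hC1 hA25 hB25 hC25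

theorem stmt_7 (S : Multiset ℕ) (hS : ∀ x ∈ S, 0 < x) (hcard : Multiset.card S ≤ 3) :
    B S ≤ 2401 ∧ B S < 2489 := by
  have main : B S ≤ 2401 := by
    have h : Multiset.card S = 0 ∨ Multiset.card S = 1 ∨ Multiset.card S = 2 ∨
        Multiset.card S = 3 := by omega
    rcases h with h | h | h | h
    · rw [Multiset.card_eq_zero] at h
      subst h
      norm_num [B]
    · rw [Multiset.card_eq_one] at h
      obtain ⟨a, rfl⟩ := h
      have ha : 0 < a := hS a (by simp)
      have : B {a} = B (1 ::ₘ 1 ::ₘ a ::ₘ 0) := by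
        rw [B_cons_one, B_cons_one]
        rfl
      rw [this]
      exact key 1 1 a one_pos one_pos ha
    · rw [Multiset.card_eq_two] at h
      obtain ⟨a, b, rfl⟩ := h
      have ha : 0 < a := hS a (by simp)
      have hb : 0 < b := hS b (by simp)
      have : B {a, b} = B (1 ::ₘ a ::ₘ b ::ₘ 0) := by
        rw [B_cons_one]
        rfl
      rw [this]
      exact key 1 a b one_pos ha hb
    · rw [Multiset.card_eq_three] at h
      obtain ⟨a, b, c, rfl⟩ := h
      have ha : 0 < a := hS a (by simp)
      have hb : 0 < b := hS b (by simp)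
      have hc : 0 < c := hS c (by simp)
      exact key a b c ha hb hc
  exact ⟨main, lt_of_le_of_lt main (by norm_num)⟩
end

section
/- Let r_1 > r_2 > r_3 > r_4 ≥ 2 be pairwise coprime prime powers with ∑_{k=1}^4 (r_k − 1/r_k) < 24 and r_1 ≥ 11. Then r_1·r_2·r_3·r_4 · (24 − ∑_{k=1}^4 (r_k − 1/r_k)) < 2489. -/
/-!
Clearing denominators, `r₁ r₂ r₃ r₄ (24 - ∑ (r_k - 1/r_k))` is an integer polynomial in the `r_k`.
Since every `1/r_k ≤ 1/2`, the hypothesis forces `r₁ + r₂ + r₃ + r₄ ≤ 25`, hence `r₁ ≤ 16`; on the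
finitely many `16 ≥ r₁ > r₂ > r₃ > r₄ ≥ 2` with `r₁ ≥ 11` the polynomial is checked to stay below
`2489` (its largest value is `1366`, at `(11, 4, 3, 2)`).
-/

def clearedDeficit (a b c d : ℕ) : ℤ :=
  (24 - (a + b + c + d : ℤ)) * (a * b * c * d) + (b * c * d + a * c * d + a * b * d + a * b * c)

theorem cast_clearedDeficit {K : Type*} [Field K] [CharZero K] {a b c d : ℕ}
    (ha : a ≠ 0) (hb : b ≠ 0) (hc : c ≠ 0) (hd : d ≠ 0) :
    (clearedDeficit a b c d : K) = a * b * c * d *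
      (24 - (((a : K) - 1 / a) + ((b : K) - 1 / b) + ((c : K) - 1 / c) + ((d : K) - 1 / d))) := by
  unfold clearedDeficit
  push_cast
  field_simp
  ring

set_option synthInstance.maxSize 1000 in
theorem clearedDeficit_lt_2489 :
    ∀ a : ℕ, a < 17 → ∀ b < a, ∀ c < b, ∀ d < c, 2 ≤ d → 11 ≤ a → clearedDeficit a b c d < 2489 := by
  decide

theorem one_div_natCast_le_half {K : Type*} [Field K] [LinearOrder K] [IsStrictOrderedRing K]
    {n : ℕ} (hn : 2 ≤ n) : 1 / (n : K) ≤ 1 / 2 :=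
  one_div_le_one_div_of_le two_pos (by exact_mod_cast hn)

theorem add_add_add_lt_of_sum_sub_one_div_lt {a b c d N : ℕ}
    (ha : 2 ≤ a) (hb : 2 ≤ b) (hc : 2 ≤ c) (hd : 2 ≤ d)
    (h : ((a : ℚ) - 1 / a) + ((b : ℚ) - 1 / b) + ((c : ℚ) - 1 / c) + ((d : ℚ) - 1 / d) < N) :
    a + b + c + d < N + 2 := by
  have hS : ((a + b + c + d : ℕ) : ℚ) < N + 2 := by
    push_cast
    linarith [one_div_natCast_le_half (K := ℚ) ha, one_div_natCast_le_half (K := ℚ) hb,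
      one_div_natCast_le_half (K := ℚ) hc, one_div_natCast_le_half (K := ℚ) hd]
  exact_mod_cast hS

theorem stmt_9_general (r₁ r₂ r₃ r₄ : ℕ)
    (hgt₁ : r₁ > r₂) (hgt₂ : r₂ > r₃) (hgt₃ : r₃ > r₄) (hge : r₄ ≥ 2)
    (hsum : ((r₁ : ℚ) - 1 / r₁) + ((r₂ : ℚ) - 1 / r₂) + ((r₃ : ℚ) - 1 / r₃)
        + ((r₄ : ℚ) - 1 / r₄) < 24)
    (h11 : 11 ≤ r₁) :
    (r₁ * r₂ * r₃ * r₄ : ℚ) *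
        (24 - (((r₁ : ℚ) - 1 / r₁) + ((r₂ : ℚ) - 1 / r₂) + ((r₃ : ℚ) - 1 / r₃)
          + ((r₄ : ℚ) - 1 / r₄))) < 2489 := by
  have hS : r₁ + r₂ + r₃ + r₄ < 24 + 2 :=
    add_add_add_lt_of_sum_sub_one_div_lt (by omega) (by omega) (by omega) hge (by exact_mod_cast hsum)
  have hlt := clearedDeficit_lt_2489 r₁ (by omega) r₂ hgt₁ r₃ hgt₂ r₄ hgt₃ hge h11
  rw [← cast_clearedDeficit (by omega) (by omega) (by omega) (by omega)]
  exact_mod_cast hlt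

theorem stmt_9 (r₁ r₂ r₃ r₄ : ℕ)
    (hpp₁ : IsPrimePow r₁) (hpp₂ : IsPrimePow r₂) (hpp₃ : IsPrimePow r₃)
    (hpp₄ : IsPrimePow r₄)
    (h₁₂ : Nat.Coprime r₁ r₂) (h₁₃ : Nat.Coprime r₁ r₃) (h₁₄ : Nat.Coprime r₁ r₄)
    (h₂₃ : Nat.Coprime r₂ r₃) (h₂₄ : Nat.Coprime r₂ r₄) (h₃₄ : Nat.Coprime r₃ r₄)
    (hgt₁ : r₁ > r₂) (hgt₂ : r₂ > r₃) (hgt₃ : r₃ > r₄) (hge : r₄ ≥ 2)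
    (hsum : ((r₁ : ℚ) - 1 / r₁) + ((r₂ : ℚ) - 1 / r₂) + ((r₃ : ℚ) - 1 / r₃)
        + ((r₄ : ℚ) - 1 / r₄) < 24)
    (h11 : 11 ≤ r₁) :
    (r₁ * r₂ * r₃ * r₄ : ℚ) *
        (24 - (((r₁ : ℚ) - 1 / r₁) + ((r₂ : ℚ) - 1 / r₂) + ((r₃ : ℚ) - 1 / r₃)
          + ((r₄ : ℚ) - 1 / r₄))) < 2489 :=
  stmt_9_general r₁ r₂ r₃ r₄ hgt₁ hgt₂ hgt₃ hge hsum h11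
end

section
/- Let S be a finite multiset of pairwise coprime integers, each at least 2, such that ∑_{r ∈ S} (r − 1/r) < 24 and the cardinality of S is not equal to 4. Then B(S) ≤ 2401 < 2489. -/
lemma Nat.Coprime.lt_of_le_of_two_le {m n : ℕ} (h : m.Coprime n) (hm : 2 ≤ m) (hmn : m ≤ n) :
    m < n :=
  hmn.lt_of_ne fun heq => by rw [← heq, Nat.coprime_self] at h; omega

lemma Nat.Coprime.odd_or_odd {m n : ℕ} (h : m.Coprime n) : Odd m ∨ Odd n := by
  by_contra! hev
  simp only [Nat.not_odd_iff_even] at hev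
  have := Nat.eq_one_of_dvd_coprimes h (even_iff_two_dvd.mp hev.1) (even_iff_two_dvd.mp hev.2)
  omega

lemma Multiset.lcm_le_prod {S : Multiset ℕ} (hS : ∀ x ∈ S, 0 < x) : S.lcm ≤ S.prod :=
  Nat.le_of_dvd (Multiset.prod_pos hS) (Multiset.lcm_dvd.mpr fun _ => Multiset.dvd_prod)

lemma sub_one_div_le_sub_one_div {K : Type*} [Field K] [LinearOrder K] [IsStrictOrderedRing K]
    {a b : K} (ha : 0 < a) (hab : a ≤ b) : a - 1 / a ≤ b - 1 / b := by
  linarith [one_div_le_one_div_of_le ha hab]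

lemma mul_mul_mul_le_pow_four {K : Type*} [Field K] [LinearOrder K] [IsStrictOrderedRing K]
    {x y z w : K} (hx : 0 ≤ x) (hy : 0 ≤ y) (hz : 0 ≤ z) (hw : 0 ≤ w) :
    x * y * z * w ≤ ((x + y + z + w) / 4) ^ 4 := by
  have hxy : x * y ≤ ((x + y) / 2) ^ 2 := by nlinarith [sq_nonneg (x - y)]
  have hzw : z * w ≤ ((z + w) / 2) ^ 2 := by nlinarith [sq_nonneg (z - w)]
  have hmid : (x + y) / 2 * ((z + w) / 2) ≤ ((x + y + z + w) / 4) ^ 2 := by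
    nlinarith [sq_nonneg (x + y - z - w)]
  calc x * y * z * w = (x * y) * (z * w) := by ring
    _ ≤ ((x + y) / 2) ^ 2 * ((z + w) / 2) ^ 2 :=
        mul_le_mul hxy hzw (by positivity) (by positivity)
    _ = ((x + y) / 2 * ((z + w) / 2)) ^ 2 := by ring
    _ ≤ (((x + y + z + w) / 4) ^ 2) ^ 2 := pow_le_pow_left₀ (by positivity) hmid 2
    _ = ((x + y + z + w) / 4) ^ 4 := by ring

lemma mul_mul_mul_sub_sum_sub_one_div_le {x y z : ℚ} (hx : 1 ≤ x) (hy : 1 ≤ y) (hz : 1 ≤ z)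
    (hsum : x - 1 / x + (y - 1 / y + (z - 1 / z)) < 24) :
    x * y * z * (24 - (x - 1 / x + (y - 1 / y + (z - 1 / z)))) ≤ 2401 := by
  have hexpand : x * y * z * (24 - (x - 1 / x + (y - 1 / y + (z - 1 / z))))
      = x * y * z * (24 - (x + y + z)) + (x * y + y * z + z * x) := by
    field_simp
    ring
  have hs : x + y + z < 27 := by
    linarith [div_le_one_of_le₀ hx (by linarith), div_le_one_of_le₀ hy (by linarith),
      div_le_one_of_le₀ hz (by linarith)]
  have hcubic : x * y * z * (24 - (x + y + z)) ≤ 1296 := by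
    rcases le_total (x + y + z) 24 with hle | hge
    · calc x * y * z * (24 - (x + y + z))
          ≤ ((x + y + z + (24 - (x + y + z))) / 4) ^ 4 :=
            mul_mul_mul_le_pow_four (by linarith) (by linarith) (by linarith) (by linarith)
        _ = 1296 := by norm_num
    · exact (mul_nonpos_of_nonneg_of_nonpos (by positivity) (by linarith)).trans (by norm_num)
  have hquadratic : x * y + y * z + z * x ≤ 243 := by
    nlinarith [sq_nonneg (x - y), sq_nonneg (y - z), sq_nonneg (z - x)]
  linarith

-- The left-hand map runs over the coercion `(S : Multiset ℚ)`, which elaborates as a monadic bind.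
lemma Multiset.map_sub_one_div_natCast (S : Multiset ℕ) :
    S.map (fun r => (r : ℚ) - 1 / r) = S.map (fun r : ℕ => (r : ℚ) - 1 / r) := by
  simp only [Multiset.pure_def, Multiset.bind_def, Multiset.bind_singleton, Multiset.map_map]
  rfl

lemma B_le_prod_mul {S : Multiset ℕ} (hS : ∀ x ∈ S, 0 < x)
    (hsum : (S.map (fun r : ℕ => (r : ℚ) - 1 / r)).sum ≤ 24) :
    B S ≤ (S.prod : ℚ) * (24 - (S.map (fun r : ℕ => (r : ℚ) - 1 / r)).sum) := by
  rw [B, Multiset.map_sub_one_div_natCast]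
  exact mul_le_mul_of_nonneg_right (by exact_mod_cast Multiset.lcm_le_prod hS) (by linarith)

lemma B_le_of_card_le_three {S : Multiset ℕ} (hS : ∀ x ∈ S, 0 < x)
    (hsum : (S.map (fun r : ℕ => (r : ℚ) - 1 / r)).sum < 24) (hcard : Multiset.card S ≤ 3) :
    B S ≤ 2401 := by
  set T := S + Multiset.replicate (3 - Multiset.card S) 1
  have hprod : T.prod = S.prod := by simp [T]
  have hsumT : (T.map (fun r : ℕ => (r : ℚ) - 1 / r)).sum
      = (S.map (fun r : ℕ => (r : ℚ) - 1 / r)).sum := by simp [T]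
  have hTpos : ∀ x ∈ T, 1 ≤ x := by
    simp only [T, Multiset.mem_add, Multiset.mem_replicate]
    rintro x (hx | ⟨-, rfl⟩)
    exacts [hS x hx, le_rfl]
  have hT : Multiset.card T = 3 := by
    rw [Multiset.card_add, Multiset.card_replicate]
    omega
  obtain ⟨a, b, c, habc⟩ := Multiset.card_eq_three.mp hT
  simp only [habc, Multiset.insert_eq_cons, Multiset.mem_cons, Multiset.mem_singleton,
    forall_eq_or_imp, forall_eq] at hTpos
  have hsum_abc : (a : ℚ) - 1 / a + ((b : ℚ) - 1 / b + ((c : ℚ) - 1 / c)) < 24 := by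
    simpa only [← hsumT, habc, Multiset.insert_eq_cons, Multiset.map_cons, Multiset.sum_cons,
      Multiset.map_singleton, Multiset.sum_singleton] using hsum
  calc B S ≤ (S.prod : ℚ) * (24 - (S.map (fun r : ℕ => (r : ℚ) - 1 / r)).sum) :=
        B_le_prod_mul hS hsum.le
    _ = (T.prod : ℚ) * (24 - (T.map (fun r : ℕ => (r : ℚ) - 1 / r)).sum) := by rw [hprod, hsumT]
    _ = a * b * c * (24 - ((a : ℚ) - 1 / a + ((b : ℚ) - 1 / b + ((c : ℚ) - 1 / c)))) := by
        simp only [habc, Multiset.insert_eq_cons, Multiset.map_cons, Multiset.sum_cons,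
          Multiset.prod_cons, Multiset.map_singleton, Multiset.sum_singleton,
          Multiset.prod_singleton]
        push_cast
        ring
    _ ≤ 2401 := mul_mul_mul_sub_sum_sub_one_div_le (by exact_mod_cast hTpos.1)
        (by exact_mod_cast hTpos.2.1) (by exact_mod_cast hTpos.2.2) hsum_abc

lemma twentyfour_le_sum_of_five_le_card {S : Multiset ℕ} (h2 : ∀ x ∈ S, 2 ≤ x)
    (hcop : S.Pairwise Nat.Coprime) (hcard : 5 ≤ Multiset.card S) :
    24 ≤ (S.map (fun r : ℕ => (r : ℚ) - 1 / r)).sum := by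
  obtain ⟨l, hl, rfl⟩ : ∃ l : List ℕ,
      l.Pairwise (fun x y => 2 ≤ x ∧ x < y ∧ (x % 2 = 1 ∨ y % 2 = 1)) ∧ (l : Multiset ℕ) = S := by
    refine ⟨S.sort (· ≤ ·), ?_, S.sort_eq _⟩
    have hcop' : (S.sort (· ≤ ·)).Pairwise Nat.Coprime := by
      rwa [← Multiset.pairwise_coe_iff_pairwise, Multiset.sort_eq]
    refine ((S.pairwise_sort _).and hcop').imp_of_mem fun hx _ ⟨hle, hxy⟩ => ?_
    have hx2 := h2 _ ((Multiset.mem_sort _).mp hx)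
    refine ⟨hx2, hxy.lt_of_le_of_two_le hx2 hle, ?_⟩
    simpa only [Nat.odd_iff] using hxy.odd_or_odd
  match l, hl, hcard with
  | a :: b :: c :: d :: e :: rest, hl, _ =>
    have hfive := hl.sublist (List.sublist_append_left [a, b, c, d, e] rest)
    have hbounds : 2 ≤ a ∧ 3 ≤ b ∧ 5 ≤ c ∧ 7 ≤ d ∧ 9 ≤ e := by
      simp only [List.pairwise_cons, List.mem_cons, List.not_mem_nil, or_false, forall_eq_or_imp,
        forall_eq, IsEmpty.forall_iff, implies_true, List.Pairwise.nil, and_self, and_true] at hfive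
      omega
    have hmono {m : ℚ} {x : ℕ} (hm : 0 < m) (hx : m ≤ x) : m - 1 / m ≤ (x : ℚ) - 1 / x :=
      sub_one_div_le_sub_one_div hm hx
    have hrest : 0 ≤ (rest.map (fun r : ℕ => (r : ℚ) - 1 / r)).sum := by
      refine List.sum_nonneg fun q hq => ?_
      obtain ⟨x, hx, rfl⟩ := List.mem_map.mp hq
      have := hmono two_pos (by exact_mod_cast h2 x (by simp [hx]))
      linarith
    rw [Multiset.map_coe, Multiset.sum_coe]
    simp only [List.map_cons, List.sum_cons]
    linarith [hmono (m := 2) (by norm_num) (by exact_mod_cast hbounds.1),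
      hmono (m := 3) (by norm_num) (by exact_mod_cast hbounds.2.1),
      hmono (m := 5) (by norm_num) (by exact_mod_cast hbounds.2.2.1),
      hmono (m := 7) (by norm_num) (by exact_mod_cast hbounds.2.2.2.1),
      hmono (m := 9) (by norm_num) (by exact_mod_cast hbounds.2.2.2.2)]

theorem stmt_17 (S : Multiset ℕ) (h2 : ∀ x ∈ S, 2 ≤ x)
    (hcop : S.Pairwise Nat.Coprime)
    (hsum : (S.map (fun r => (r : ℚ) - 1 / r)).sum < 24)
    (hcard : Multiset.card S ≠ 4) :
    B S ≤ 2401 ∧ (2401 : ℚ) < 2489 := by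
  rw [Multiset.map_sub_one_div_natCast] at hsum
  refine ⟨B_le_of_card_le_three (fun x hx => zero_lt_two.trans_le (h2 x hx)) hsum ?_, by norm_num⟩
  by_contra! hbig
  exact (twentyfour_le_sum_of_five_le_card h2 hcop (by omega)).not_gt hsum
end
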